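/- arXiv:1904.06651 — 3 statements merged into one kernel-verified Lean document; each statement's English description precedes it below -/
import Mathlib

section
/- Let k be a field, d = d_0 + d_1 + ⋯ + d_l a partition of d into nonnegative integers, V = k^d with the decomposition V = V_0 ⊕ ⋯ ⊕ V_l (dim V_i = d_i) and decreasing filtration Fil^i V = ⊕_{j ≥ i} V_j for 0 ≤ i ≤ l. Let 0 ≤ s ≤ l and let M be a d×d matrix over k, written in blocks a_{i,j} ∈ M_{d_i × d_j}(k) (0 ≤ i, j ≤ l), which is lower-triangular of type ≤ s (meaning a_{i,i+t} = 0 for all t > s) and special (meaning rank(M) = Σ_{i=0}^{l-s} rank(a_{i,i+s})). Let 𝕄 be the endomorphism of V with matrix M. Then for every integer i, 𝕄(Fil^{i+s} V) = im(𝕄) ∩ Fil^{i} V. -/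
/-!
Let `W = im 𝕄` and `U_m = 𝕄(Fil^{m+s}) ⊆ W ∩ Fil^m`. The dimension of `W` is the sum of the
dimensions of its graded pieces `gr_p W = pr_p (W ∩ Fil^p) ⊆ V_p`, while `pr_p U_p` contains the
image of `a_{p,p+s}`. Specialness says that these ranks already add up to `dim W`, which forces
`pr_p U_p = gr_p W` for every `p`. Hence `W ∩ Fil^m ⊆ U_m + W ∩ Fil^{m+1}`, and a descending
induction on `m` gives `W ∩ Fil^m ⊆ U_m`.
-/

noncomputable def blockEnd (k : Type*) [Field k] (l : ℕ) (d : Fin (l + 1) → ℕ)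
    (a : ∀ i j : Fin (l + 1), Matrix (Fin (d i)) (Fin (d j)) k) :
    (∀ i : Fin (l + 1), Fin (d i) → k) →ₗ[k] (∀ i : Fin (l + 1), Fin (d i) → k) :=
  LinearMap.pi fun i => ∑ j : Fin (l + 1), (Matrix.mulVecLin (a i j)) ∘ₗ LinearMap.proj j

def blockFil (k : Type*) [Field k] (l : ℕ) (d : Fin (l + 1) → ℕ) (m : ℤ) :
    Submodule k (∀ i : Fin (l + 1), Fin (d i) → k) where
  carrier := {v | ∀ i : Fin (l + 1), (i : ℤ) < m → v i = 0}
  add_mem' := by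
    intro x y hx hy i him
    simp [Pi.add_apply, hx i him, hy i him]
  zero_mem' := by intro i _; rfl
  smul_mem' := by
    intro c x hx i him
    simp [Pi.smul_apply, hx i him]

open Module

theorem le_of_forall_le_sup_add_one {α : Type*} [Lattice α] [OrderBot α] {U W : ℤ → α}
    (hU : Antitone U) (hstep : ∀ m, W m ≤ U m ⊔ W (m + 1)) {N : ℤ}
    (hN : ∀ m, N ≤ m → W m = ⊥) (m : ℤ) : W m ≤ U m := by
  rcases le_total N m with h | h
  · simp [hN m h]
  induction m, h using Int.leInductionDown with
  | base => simp [hN N le_rfl]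
  | pred n _ ih =>
    calc W (n - 1) ≤ U (n - 1) ⊔ W n := by simpa using hstep (n - 1)
      _ ≤ U (n - 1) ⊔ U n := sup_le_sup_left ih _
      _ = U (n - 1) := sup_eq_left.2 (hU (by omega))

section BlockFiltration

variable {k : Type*} [Field k] {l : ℕ} {d : Fin (l + 1) → ℕ}

lemma blockFil_antitone : Antitone (blockFil k l d) :=
  fun _ _ h _ hv i hi => hv i (hi.trans_le h)

lemma blockFil_eq_top {m : ℤ} (hm : m ≤ 0) : blockFil k l d m = ⊤ :=
  eq_top_iff.2 fun _ _ i hi => absurd hi (by omega)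

lemma blockFil_eq_bot {m : ℤ} (hm : (l : ℤ) < m) : blockFil k l d m = ⊥ :=
  eq_bot_iff.2 fun _ hv => (Submodule.mem_bot k).2 <| funext fun i => hv i (by omega)

lemma mem_blockFil_add_one_iff {m : ℤ} {v : ∀ i : Fin (l + 1), Fin (d i) → k} :
    v ∈ blockFil k l d (m + 1) ↔
      v ∈ blockFil k l d m ∧ ∀ p : Fin (l + 1), (p : ℤ) = m → v p = 0 := by
  refine ⟨fun hv => ⟨fun i hi => hv i (by omega), fun p hp => hv p (by omega)⟩, ?_⟩
  rintro ⟨hv, hvm⟩ i hi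
  rcases (Int.lt_add_one_iff.1 hi).lt_or_eq with hi | hi
  exacts [hv i hi, hvm i hi]

def blockGr (W : Submodule k (∀ i : Fin (l + 1), Fin (d i) → k)) (p : Fin (l + 1)) :
    Submodule k (Fin (d p) → k) :=
  (W ⊓ blockFil k l d p).map (LinearMap.proj p)

lemma finrank_inf_blockFil (W : Submodule k (∀ i : Fin (l + 1), Fin (d i) → k))
    (p : Fin (l + 1)) :
    finrank k ↥(W ⊓ blockFil k l d p) =
      finrank k (blockGr W p) + finrank k ↥(W ⊓ blockFil k l d (p + 1)) := by
  set f := (LinearMap.proj (φ := fun i : Fin (l + 1) => Fin (d i) → k) p).domRestrict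
    (W ⊓ blockFil k l d p)
  have hker : LinearMap.ker f = (W ⊓ blockFil k l d (p + 1)).comap (Submodule.subtype _) := by
    ext ⟨v, hvW, hv⟩
    simp only [f, LinearMap.mem_ker, LinearMap.domRestrict_apply, LinearMap.proj_apply,
      Submodule.mem_comap, Submodule.coe_subtype, Submodule.mem_inf, mem_blockFil_add_one_iff]
    exact ⟨fun h => ⟨hvW, hv, fun q hq => (Fin.ext (by omega) : p = q) ▸ h⟩, fun h => h.2.2 p rfl⟩
  have := LinearMap.finrank_range_add_finrank_ker f
  rw [LinearMap.range_domRestrict, hker,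
    (Submodule.comapSubtypeEquivOfLe (inf_le_inf_left W (blockFil_antitone (by omega)))).finrank_eq]
    at this
  exact this.symm

lemma finrank_eq_sum_finrank_blockGr (W : Submodule k (∀ i : Fin (l + 1), Fin (d i) → k)) :
    finrank k W = ∑ p : Fin (l + 1), finrank k (blockGr W p) := by
  set r : ℕ → ℕ := fun n => finrank k ↥(W ⊓ blockFil k l d n)
  have hstep (p : Fin (l + 1)) : (finrank k (blockGr W p) : ℤ) = r p - r (p + 1) := by
    simp only [r, finrank_inf_blockFil W p]
    push_cast
    ring
  have h0 : r 0 = finrank k W := by simp only [r]; rw [blockFil_eq_top (by simp), inf_top_eq]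
  have htop : r (l + 1) = 0 := by simp [r, blockFil_eq_bot]
  zify
  rw [Finset.sum_congr rfl fun p _ => hstep p,
    Fin.sum_univ_eq_sum_range (fun n => (r n : ℤ) - r (n + 1)), Finset.sum_range_sub', h0, htop]
  simp

lemma inf_blockFil_le_sup {W : Submodule k (∀ i : Fin (l + 1), Fin (d i) → k)}
    {U : ℤ → Submodule k (∀ i : Fin (l + 1), Fin (d i) → k)}
    (hUW : ∀ m, U m ≤ W ⊓ blockFil k l d m)
    (hgr : ∀ p : Fin (l + 1), blockGr W p ≤ (U p).map (LinearMap.proj p)) (m : ℤ) :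
    W ⊓ blockFil k l d m ≤ U m ⊔ W ⊓ blockFil k l d (m + 1) := by
  intro x hx
  by_cases hm : ∃ p : Fin (l + 1), (p : ℤ) = m
  · obtain ⟨p, rfl⟩ := hm
    obtain ⟨u, hu, hux⟩ := hgr p ⟨x, hx, rfl⟩
    have hxu : x - u ∈ W ⊓ blockFil k l d (p + 1) := by
      obtain ⟨hxuW, hxuFil⟩ := sub_mem hx (hUW p hu)
      refine ⟨hxuW, mem_blockFil_add_one_iff.2 ⟨hxuFil, fun q hq => ?_⟩⟩
      obtain rfl : q = p := Fin.ext (by omega)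
      exact sub_eq_zero.2 hux.symm
    exact Submodule.mem_sup.2 ⟨u, hu, x - u, hxu, add_sub_cancel u x⟩
  · exact Submodule.mem_sup_right
      ⟨hx.1, mem_blockFil_add_one_iff.2 ⟨hx.2, fun p hp => (hm ⟨p, hp⟩).elim⟩⟩

variable (a : ∀ i j : Fin (l + 1), Matrix (Fin (d i)) (Fin (d j)) k)

lemma blockEnd_apply (v : ∀ i : Fin (l + 1), Fin (d i) → k) (i : Fin (l + 1)) :
    blockEnd k l d a v i = ∑ j, (a i j).mulVec (v j) := by
  simp [blockEnd]

lemma map_blockEnd_blockFil_le {s : ℕ} (htri : ∀ i j : Fin (l + 1), (i : ℕ) + s < j → a i j = 0)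
    (m : ℤ) : (blockFil k l d (m + s)).map (blockEnd k l d a) ≤ blockFil k l d m := by
  rintro _ ⟨v, hv, rfl⟩ p hp
  rw [blockEnd_apply]
  refine Finset.sum_eq_zero fun j _ => ?_
  rcases lt_or_ge (j : ℤ) (m + s) with hj | hj
  · rw [hv j hj, Matrix.mulVec_zero]
  · rw [htri p j (by omega), Matrix.zero_mulVec]

lemma range_mulVecLin_le_map_proj (p q : Fin (l + 1)) :
    LinearMap.range (a p q).mulVecLin ≤
      ((blockFil k l d q).map (blockEnd k l d a)).map (LinearMap.proj p) := by
  classical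
  rintro _ ⟨w, rfl⟩
  have hw : Pi.single q w ∈ blockFil k l d q :=
    fun j hj => Pi.single_eq_of_ne (fun h : j = q => by subst h; omega) _
  refine ⟨_, Submodule.mem_map_of_mem hw, ?_⟩
  rw [LinearMap.proj_apply, blockEnd_apply, Matrix.mulVecLin_apply,
    Finset.sum_eq_single q (fun j _ hj => by rw [Pi.single_eq_of_ne hj, Matrix.mulVec_zero])
      (by simp), Pi.single_eq_same]

lemma blockGr_range_le_map_proj {s : ℕ}
    (htri : ∀ i j : Fin (l + 1), (i : ℕ) + s < j → a i j = 0)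
    (hspecial : finrank k (LinearMap.range (blockEnd k l d a))
      = ∑ i : Fin (l + 1),
          if h : (i : ℕ) + s ≤ l then (a i ⟨(i : ℕ) + s, Nat.lt_succ_of_le h⟩).rank else 0)
    (p : Fin (l + 1)) :
    blockGr (LinearMap.range (blockEnd k l d a)) p ≤
      ((blockFil k l d (p + s)).map (blockEnd k l d a)).map (LinearMap.proj p) := by
  set R := LinearMap.range (blockEnd k l d a)
  set U := fun q : Fin (l + 1) =>
    ((blockFil k l d (q + s)).map (blockEnd k l d a)).map (LinearMap.proj q)
  set T := fun i : Fin (l + 1) =>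
    if h : (i : ℕ) + s ≤ l then (a i ⟨(i : ℕ) + s, Nat.lt_succ_of_le h⟩).rank else 0
  have hUR (q : Fin (l + 1)) : U q ≤ blockGr R q :=
    Submodule.map_mono (le_inf LinearMap.map_le_range (map_blockEnd_blockFil_le a htri q))
  have hTU (q : Fin (l + 1)) : T q ≤ finrank k (U q) := by
    simp only [T]
    split_ifs with h
    · exact Submodule.finrank_mono (range_mulVecLin_le_map_proj a q ⟨q + s, by omega⟩)
    · exact Nat.zero_le _
  have hsum : ∑ q, T q = ∑ q, finrank k (blockGr R q) :=
    hspecial.symm.trans (finrank_eq_sum_finrank_blockGr R)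
  -- `T q ≤ dim U q ≤ dim gr_q R` termwise, with equal sums of the outer terms.
  have hTR : T p = finrank k (blockGr R p) :=
    (Finset.sum_eq_sum_iff_of_le fun q _ => (hTU q).trans (Submodule.finrank_mono (hUR q))).1
      hsum p (Finset.mem_univ p)
  exact (Submodule.eq_of_le_of_finrank_le (hUR p) (hTR ▸ hTU p)).ge

end BlockFiltration

/-- If the block matrix `M = (a_{i,j})` is special lower-triangular of
type `≤ s` (i.e. `a_{i,i+t} = 0` for `t > s` and `rank M = Σ_i rank a_{i,i+s}`), then for
every integer `i`, `𝕄(Fil^{i+s} V) = im(𝕄) ∩ Fil^i V`. -/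
theorem stmt_8 (k : Type*) [Field k] (l s : ℕ) (d : Fin (l + 1) → ℕ)
    (a : ∀ i j : Fin (l + 1), Matrix (Fin (d i)) (Fin (d j)) k)
    (htri : ∀ i j : Fin (l + 1), (i : ℕ) + s < (j : ℕ) → a i j = 0)
    (hspecial : Module.finrank k (LinearMap.range (blockEnd k l d a))
      = ∑ i : Fin (l + 1),
          if h : (i : ℕ) + s ≤ l then (a i ⟨(i : ℕ) + s, by omega⟩).rank else 0) :
    ∀ i : ℤ, Submodule.map (blockEnd k l d a) (blockFil k l d (i + s))
      = LinearMap.range (blockEnd k l d a) ⊓ blockFil k l d i := by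
  set U := fun m : ℤ => (blockFil k l d (m + s)).map (blockEnd k l d a)
  have hUW (m : ℤ) : U m ≤ LinearMap.range (blockEnd k l d a) ⊓ blockFil k l d m :=
    le_inf LinearMap.map_le_range (map_blockEnd_blockFil_le a htri m)
  intro i
  refine (hUW i).antisymm (le_of_forall_le_sup_add_one (U := U) ?_
    (inf_blockFil_le_sup hUW (blockGr_range_le_map_proj a htri hspecial)) (N := l + 1) ?_ i)
  · exact fun m m' h => Submodule.map_mono (blockFil_antitone (by omega))
  · intro m hm
    rw [blockFil_eq_bot (by omega), inf_bot_eq]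
end

section
/- Let A be a noetherian integral domain and f : M → N an injective homomorphism of finitely generated A-modules. Then there exists a nonzero element a ∈ A such that for every maximal ideal m of the localization A_a, the induced map f ⊗ κ(m) : M ⊗_A κ(m) → N ⊗_A κ(m) on fibers is injective, where κ(m) = A_a/m. -/
/-!
Let `Q = N / f(M)`. By generic freeness `Q_a` is free over `A_a` for some `a ≠ 0`, so
`0 → M_a → N_a → Q_a → 0` is a short exact sequence of `A_a`-modules with flat cokernel.
Tensoring it with any `A_a`-algebra `κ` therefore keeps `M_a ⊗ κ → N_a ⊗ κ` injective
(`Tor₁(Q_a, κ) = 0`), and `M_a ⊗_{A_a} κ = M ⊗_A κ`.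
-/

open TensorProduct

namespace LinearMap

variable {A R S M N : Type*} [CommRing A] [CommRing R] [Algebra A R] [CommRing S]
  [Algebra A S] [Algebra R S] [IsScalarTower A R S]
  [AddCommGroup M] [Module A M] [AddCommGroup N] [Module A N]

lemma baseChange_injective_of_injective_baseChange_baseChange {f : M →ₗ[A] N}
    (hf : Function.Injective ((f.baseChange R).baseChange S)) :
    Function.Injective (f.baseChange S) := by
  rw [baseChange_baseChange] at hf
  simpa only [coe_comp, LinearEquiv.coe_coe, EquivLike.comp_injective,
    EquivLike.injective_comp] using hf

lemma exact_baseChange_mkQ_range (f : M →ₗ[A] N) :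
    Function.Exact (f.baseChange R) ((range f).mkQ.baseChange R) :=
  lTensor_exact R (exact_map_mkQ_range f) (Submodule.mkQ_surjective _)

lemma baseChange_injective_of_flat_baseChange_cokernel [Module.Flat A R]
    {f : M →ₗ[A] N} (hf : Function.Injective f) [Module.Flat R (R ⊗[A] (N ⧸ range f))] :
    Function.Injective (f.baseChange S) := by
  have hfR : Function.Injective (f.baseChange R) := by
    rw [baseChange_eq_ltensor]
    exact Module.Flat.lTensor_preserves_injective_linearMap f hf
  have hqR : Function.Surjective ((range f).mkQ.baseChange R) := by
    rw [baseChange_eq_ltensor]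
    exact lTensor_surjective R (Submodule.mkQ_surjective _)
  apply baseChange_injective_of_injective_baseChange_baseChange (R := R)
  rw [baseChange_eq_ltensor]
  exact lTensor_injective_of_exact_of_flat _ hqR _ hfR (exact_baseChange_mkQ_range f) S

end LinearMap

lemma Module.exists_free_baseChange_localization_away {A Q : Type*} [CommRing A] [IsDomain A]
    [IsNoetherianRing A] [AddCommGroup Q] [Module A Q] [Module.Finite A Q] :
    ∃ a : A, a ≠ 0 ∧ Module.Free (Localization.Away a) (Localization.Away a ⊗[A] Q) := by
  have : Module.FinitePresentation A Q := Module.finitePresentation_of_finite A Q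
  obtain ⟨a, ha, hfree, -⟩ :=
    Module.FinitePresentation.exists_free_localizedModule_powers (nonZeroDivisors A)
      (LocalizedModule.mkLinearMap (nonZeroDivisors A) Q) (FractionRing A)
  exact ⟨a, nonZeroDivisors.ne_zero ha, .of_equiv
    (IsLocalizedModule.isBaseChange (Submonoid.powers a) (Localization.Away a)
      (LocalizedModule.mkLinearMap (Submonoid.powers a) Q)).equiv.symm⟩

theorem stmt_13_general {A : Type*} [CommRing A] [IsDomain A] [IsNoetherianRing A]
    {M N : Type*} [AddCommGroup M] [Module A M] [AddCommGroup N] [Module A N]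
    [Module.Finite A N]
    (f : M →ₗ[A] N) (hf : Function.Injective f) :
    ∃ a : A, a ≠ 0 ∧ ∀ (m : Ideal (Localization.Away a)), m.IsMaximal →
      Function.Injective (LinearMap.baseChange ((Localization.Away a) ⧸ m) f) := by
  obtain ⟨a, ha, hfree⟩ :=
    Module.exists_free_baseChange_localization_away (A := A) (Q := N ⧸ LinearMap.range f)
  exact ⟨a, ha, fun m _ ↦
    LinearMap.baseChange_injective_of_flat_baseChange_cokernel (R := Localization.Away a) hf⟩

/-- Let `A` be a noetherian integral domain and `f : M → N` an
injective homomorphism of finitely generated `A`-modules.  Then there is a nonzero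
`a ∈ A` such that for every maximal ideal `m` of `A_a = Localization.Away a`, the
induced map on fibers `f ⊗ κ(m) : M ⊗ κ(m) → N ⊗ κ(m)` (with `κ(m) = A_a/m`)
is injective. -/
theorem stmt_13 {A : Type*} [CommRing A] [IsDomain A] [IsNoetherianRing A]
    {M N : Type*} [AddCommGroup M] [Module A M] [AddCommGroup N] [Module A N]
    [Module.Finite A M] [Module.Finite A N]
    (f : M →ₗ[A] N) (hf : Function.Injective f) :
    ∃ a : A, a ≠ 0 ∧ ∀ (m : Ideal (Localization.Away a)), m.IsMaximal →
      Function.Injective (LinearMap.baseChange ((Localization.Away a) ⧸ m) f) :=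
  stmt_13_general f hf
end

section
/- Fix an integer r ≥ 1, nonnegative integers j^1, …, j^r and s_0, …, s_r, and an index k with 0 < k < r. Define, for a tuple (j^1,…,j^r; s_0,…,s_r) whose denominators below are all nonzero, the rational number a'(j; s) = (s_0! ⋯ s_{r-1}!) / ( ∏_{i=1}^{r} ∏_{t=0}^{s_{i-1}} ( t + Σ_{l=i}^{r} j^l + Σ_{l=i}^{r} s_l ) ). Assume s_k ≥ 1 and that all the denominators occurring in the three expressions below are nonzero rational numbers. Then a'(j^1,…,j^{k}+1,…,j^r; s_0,…,s_k − 1,…,s_r) − a'(j^1,…,j^{k+1}+1,…,j^r; s_0,…,s_k − 1,…,s_r) = a'(j^1,…,j^r; s_0,…,s_r), as an identity of rational numbers. -/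
noncomputable def Jq (r : ℕ) (j : Fin r → ℕ) (i : Fin r) : ℚ :=
  ∑ l : Fin r, if (i : ℕ) ≤ (l : ℕ) then (j l : ℚ) else 0

noncomputable def Sq (r : ℕ) (s : Fin (r + 1) → ℕ) (i : Fin r) : ℚ :=
  ∑ l : Fin (r + 1), if (i : ℕ) + 1 ≤ (l : ℕ) then (s l : ℚ) else 0

noncomputable def aDen (r : ℕ) (j : Fin r → ℕ) (s : Fin (r + 1) → ℕ) : ℚ :=
  ∏ i : Fin r, ∏ t ∈ Finset.range (s i.castSucc + 1),
    ((t : ℚ) + (∑ l : Fin r, if (i : ℕ) ≤ (l : ℕ) then (j l : ℚ) else 0)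
      + (∑ l : Fin (r + 1), if (i : ℕ) + 1 ≤ (l : ℕ) then (s l : ℚ) else 0))

lemma aDen_eq (r : ℕ) (j : Fin r → ℕ) (s : Fin (r + 1) → ℕ) :
    aDen r j s = ∏ i : Fin r, ∏ t ∈ Finset.range (s i.castSucc + 1),
      ((t : ℚ) + Jq r j i + Sq r s i) := rfl

noncomputable def aCoef (r : ℕ) (j : Fin r → ℕ) (s : Fin (r + 1) → ℕ) : ℚ :=
  (∏ i : Fin r, (Nat.factorial (s i.castSucc) : ℚ)) / aDen r j s

lemma sum_shift {n : ℕ} (f g : Fin n → ℚ) (a : Fin n)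
    (h : ∀ l, l ≠ a → f l = g l) :
    ∑ l, f l = (∑ l, g l) + (f a - g a) := by
  rw [← Finset.add_sum_erase _ f (Finset.mem_univ a),
      ← Finset.add_sum_erase _ g (Finset.mem_univ a),
      Finset.sum_congr rfl (fun l hl => h l (Finset.ne_of_mem_erase hl))]
  ring

lemma aDen_erase (r : ℕ) (j : Fin r → ℕ) (s : Fin (r + 1) → ℕ) (K : ℕ) (hKr : K < r) :
    aDen r j s = (∏ t ∈ Finset.range (s (⟨K, hKr⟩ : Fin r).castSucc + 1),
        ((t : ℚ) + Jq r j ⟨K, hKr⟩ + Sq r s ⟨K, hKr⟩)) *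
      ∏ i ∈ Finset.univ.erase (⟨K, hKr⟩ : Fin r),
        ∏ t ∈ Finset.range (s i.castSucc + 1), ((t : ℚ) + Jq r j i + Sq r s i) := by
  rw [aDen_eq]
  exact (Finset.mul_prod_erase _ _ (Finset.mem_univ _)).symm

/-- For `0 < K < r` with `s_K ≥ 1` and all denominators nonzero,
`a'(j + e_K; s − e_K) − a'(j + e_{K+1}; s − e_K) = a'(j; s)`, where `e_K` increases
the `K`-th entry of `j` (resp. decreases the `K`-th entry of `s`) by one. -/
theorem stmt_14 (r : ℕ) (hr : 1 ≤ r) (j : Fin r → ℕ) (s : Fin (r + 1) → ℕ)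
    (K : ℕ) (hK0 : 0 < K) (hKr : K < r) (hsK : 1 ≤ s ⟨K, by omega⟩)
    (j₁ : Fin r → ℕ)
    (hj₁ : j₁ = Function.update j ⟨K - 1, by omega⟩ (j ⟨K - 1, by omega⟩ + 1))
    (j₂ : Fin r → ℕ)
    (hj₂ : j₂ = Function.update j ⟨K, hKr⟩ (j ⟨K, hKr⟩ + 1))
    (s' : Fin (r + 1) → ℕ)
    (hs' : s' = Function.update s ⟨K, by omega⟩ (s ⟨K, by omega⟩ - 1))
    (h1 : aDen r j₁ s' ≠ 0) (h2 : aDen r j₂ s' ≠ 0) (h3 : aDen r j s ≠ 0) :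
    aCoef r j₁ s' - aCoef r j₂ s' = aCoef r j s := by
  have hKr1 : K < r + 1 := by omega
  have hK1r : K - 1 < r := by omega
  have aK : Fin r := ⟨K, hKr⟩
  -- basic facts
  have hsbK : 1 ≤ s ⟨K, hKr1⟩ := hsK
  have hs'K : s' ⟨K, hKr1⟩ = s ⟨K, hKr1⟩ - 1 := by
    rw [hs']; exact Function.update_self _ _ _
  have hs'ne : ∀ m : Fin (r + 1), (m : ℕ) ≠ K → s' m = s m := by
    intro m hm
    rw [hs']
    exact Function.update_of_ne (by simp [Fin.ext_iff]; omega) _ _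
  -- sums
  have hJ1 : ∀ i : Fin r, Jq r j₁ i = Jq r j i + (if (i : ℕ) ≤ K - 1 then 1 else 0) := by
    intro i
    rw [Jq, Jq, sum_shift _ (fun l => if (i : ℕ) ≤ (l : ℕ) then (j l : ℚ) else 0)
      (⟨K - 1, hK1r⟩ : Fin r)
      (fun l hl => by rw [hj₁, Function.update_of_ne hl])]
    congr 1
    rw [hj₁]
    simp only [Function.update_self]
    by_cases hc : (i : ℕ) ≤ K - 1 <;> simp [hc]
  have hJ2 : ∀ i : Fin r, Jq r j₂ i = Jq r j i + (if (i : ℕ) ≤ K then 1 else 0) := by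
    intro i
    rw [Jq, Jq, sum_shift _ (fun l => if (i : ℕ) ≤ (l : ℕ) then (j l : ℚ) else 0)
      (⟨K, hKr⟩ : Fin r)
      (fun l hl => by rw [hj₂, Function.update_of_ne hl])]
    congr 1
    rw [hj₂]
    simp only [Function.update_self]
    by_cases hc : (i : ℕ) ≤ K <;> simp [hc]
  have hS : ∀ i : Fin r, Sq r s' i = Sq r s i - (if (i : ℕ) + 1 ≤ K then 1 else 0) := by
    intro i
    rw [Sq, Sq, sum_shift _ (fun l => if (i : ℕ) + 1 ≤ (l : ℕ) then (s l : ℚ) else 0)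
      (⟨K, hKr1⟩ : Fin (r + 1))
      (fun l hl => by rw [hs'ne l (by simpa [Fin.ext_iff] using hl)])]
    rw [hs'K]
    have : ((s ⟨K, hKr1⟩ - 1 : ℕ) : ℚ) = (s ⟨K, hKr1⟩ : ℚ) - 1 := by
      rw [Nat.cast_sub hsbK]; norm_num
    by_cases hc : (i : ℕ) + 1 ≤ K <;> simp [hc, this] <;> ring
  -- equality of erased products
  have herase : ∀ (jj : Fin r → ℕ), (∀ i : Fin r, (i : ℕ) ≠ K → Jq r jj i = Jq r j i + (if (i : ℕ) + 1 ≤ K then 1 else 0)) →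
      (∏ i ∈ Finset.univ.erase (⟨K, hKr⟩ : Fin r),
        ∏ t ∈ Finset.range (s' i.castSucc + 1), ((t : ℚ) + Jq r jj i + Sq r s' i)) =
      ∏ i ∈ Finset.univ.erase (⟨K, hKr⟩ : Fin r),
        ∏ t ∈ Finset.range (s i.castSucc + 1), ((t : ℚ) + Jq r j i + Sq r s i) := by
    intro jj hjj
    refine Finset.prod_congr rfl (fun i hi => ?_)
    have hiK : (i : ℕ) ≠ K := fun h => (Finset.mem_erase.mp hi).1 (Fin.ext h)
    rw [hs'ne i.castSucc (by simpa using hiK)]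
    refine Finset.prod_congr rfl (fun t _ => ?_)
    rw [hjj i hiK, hS i]
    ring
  -- abbreviations for the key quantities
  set X : ℚ := Jq r j ⟨K, hKr⟩ + Sq r s ⟨K, hKr⟩ with hX
  have hcastK : ((⟨K, hKr⟩ : Fin r).castSucc : Fin (r + 1)) = ⟨K, hKr1⟩ := rfl
  have hSaK : Sq r s' ⟨K, hKr⟩ = Sq r s ⟨K, hKr⟩ := by
    rw [hS]; simp [show ¬(K + 1 ≤ K) by omega]
  -- hA
  have hA : aDen r j s = aDen r j₁ s' * ((s ⟨K, hKr1⟩ : ℚ) + X) := by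
    rw [aDen_erase r j s K hKr, aDen_erase r j₁ s' K hKr]
    rw [herase j₁ (fun i _ => by rw [hJ1 i]; congr 1; by_cases hc : (i:ℕ) + 1 ≤ K <;>
      simp [hc, show ((i:ℕ) ≤ K - 1 ↔ (i:ℕ) + 1 ≤ K) by omega])]
    have hJaK : Jq r j₁ ⟨K, hKr⟩ = Jq r j ⟨K, hKr⟩ := by
      rw [hJ1]; simp [show ¬(K ≤ K - 1) by omega]
    rw [hcastK, hs'K, hJaK, hSaK, show s ⟨K, hKr1⟩ - 1 + 1 = s ⟨K, hKr1⟩ from by omega]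
    rw [show s ⟨K, hKr1⟩ + 1 = s ⟨K, hKr1⟩ + 1 from rfl, Finset.prod_range_succ]
    push_cast
    ring
  -- hB
  have hB : aDen r j s = aDen r j₂ s' * X := by
    rw [aDen_erase r j s K hKr, aDen_erase r j₂ s' K hKr]
    rw [herase j₂ (fun i hiK => by
      rw [hJ2 i]
      congr 1
      by_cases hc : (i:ℕ) + 1 ≤ K <;>
        simp [hc, show ((i:ℕ) ≤ K ↔ ((i:ℕ) + 1 ≤ K ∨ (i:ℕ) = K)) by omega, hiK])]
    have hJaK2 : Jq r j₂ ⟨K, hKr⟩ = Jq r j ⟨K, hKr⟩ + 1 := by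
      rw [hJ2]; simp
    rw [hcastK, hs'K, hJaK2, hSaK, show s ⟨K, hKr1⟩ - 1 + 1 = s ⟨K, hKr1⟩ from by omega,
      Finset.prod_range_succ']
    rw [Finset.prod_congr rfl (fun t _ => show ((Nat.cast (t + 1) : ℚ) + Jq r j ⟨K, hKr⟩ + Sq r s ⟨K, hKr⟩)
      = ((t : ℚ) + (Jq r j ⟨K, hKr⟩ + 1) + Sq r s ⟨K, hKr⟩) from by push_cast; ring)]
    push_cast
    ring
  -- numerator
  have hC : (∏ i : Fin r, (Nat.factorial (s i.castSucc) : ℚ))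
      = (∏ i : Fin r, (Nat.factorial (s' i.castSucc) : ℚ)) * (s ⟨K, hKr1⟩ : ℚ) := by
    rw [← Finset.mul_prod_erase _ _ (Finset.mem_univ (⟨K, hKr⟩ : Fin r)),
        ← Finset.mul_prod_erase _ (fun i => (Nat.factorial (s' i.castSucc) : ℚ))
          (Finset.mem_univ (⟨K, hKr⟩ : Fin r))]
    have hprod : (∏ i ∈ Finset.univ.erase (⟨K, hKr⟩ : Fin r), (Nat.factorial (s' i.castSucc) : ℚ))
        = ∏ i ∈ Finset.univ.erase (⟨K, hKr⟩ : Fin r), (Nat.factorial (s i.castSucc) : ℚ) := by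
      refine Finset.prod_congr rfl fun i hi => ?_
      rw [hs'ne i.castSucc (by
        simpa using (fun h => (Finset.mem_erase.mp hi).1 (Fin.ext h) : (i:ℕ) ≠ K))]
    rw [hprod, hcastK, hs'K]
    have := Nat.mul_factorial_pred (n := s ⟨K, hKr1⟩) (by omega)
    have hcast : ((Nat.factorial (s ⟨K, hKr1⟩)) : ℚ)
        = (s ⟨K, hKr1⟩ : ℚ) * (Nat.factorial (s ⟨K, hKr1⟩ - 1) : ℚ) := by
      exact_mod_cast congrArg (Nat.cast (R := ℚ)) this.symm
    rw [hcast]; ring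
  -- nonvanishing
  have hSXne : (s ⟨K, hKr1⟩ : ℚ) + X ≠ 0 := fun h => h3 (by rw [hA, h, mul_zero])
  have hXne : X ≠ 0 := fun h => h3 (by rw [hB, h, mul_zero])
  -- conclusion
  have e1 : aCoef r j₁ s' = ((∏ i : Fin r, (Nat.factorial (s' i.castSucc) : ℚ))
      * ((s ⟨K, hKr1⟩ : ℚ) + X)) / aDen r j s := by
    rw [aCoef, hA, mul_div_mul_right _ _ hSXne]
  have e2 : aCoef r j₂ s' = ((∏ i : Fin r, (Nat.factorial (s' i.castSucc) : ℚ)) * X)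
      / aDen r j s := by
    rw [aCoef, hB, mul_div_mul_right _ _ hXne]
  rw [e1, e2, aCoef, hC, div_sub_div_same]
  congr 1
  ring
end
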